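/- Block matrix determinant with diagonal perturbation: if Ǩ := K - W where W is strictly block lower triangular (nilpotent) and K has rank ≤ N, and ρ is block diagonal, then det(I - Ǩ∘ρ) = det(I - N∘(I-ρ))⁻¹ · det(I - N∘(I-ρ) - (I-N)∘K∘ρ); equivalently det(I - Ǩρ) = det(I - N(I-ρ) - (I-N)Kρ) since det(I - N(I-ρ)) = 1. -/
import Mathlib

open Polynomial in
lemma matrix_det_one_sub_of_isNilpotent {K : Type*} [Field K] {n : Type*} [Fintype n]
    [DecidableEq n] {M : Matrix n n K} (h : IsNilpotent M) : (1 - M).det = 1 := by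
  have hcp : M.charpoly = X ^ Fintype.card n := by
    have := Matrix.isNilpotent_charpoly_sub_pow_of_isNilpotent h
    rwa [isNilpotent_iff_eq_zero, sub_eq_zero] at this
  have : (M.charpoly).eval 1 = 1 := by simp [hcp]
  rw [Matrix.charpoly, ← Polynomial.coe_evalRingHom, RingHom.map_det] at this
  convert this using 2
  ext i j
  by_cases hij : i = j <;> simp [hij, Matrix.charmatrix_apply_eq,
    Matrix.charmatrix_apply_ne, Matrix.one_apply]

lemma det_one_sub_of_isNilpotent {𝕜 V : Type*} [Field 𝕜] [AddCommGroup V] [Module 𝕜 V]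
    [FiniteDimensional 𝕜 V] {φ : V →ₗ[𝕜] V} (h : IsNilpotent φ) :
    LinearMap.det (1 - φ) = 1 := by
  let b := Module.finBasis 𝕜 V
  rw [← LinearMap.det_toMatrix b, map_sub]
  have hM : IsNilpotent (LinearMap.toMatrix b b φ) := by
    obtain ⟨k, hk⟩ := h
    exact ⟨k, by rw [show LinearMap.toMatrix b b φ = LinearMap.toMatrixAlgEquiv b φ from rfl,
      ← map_pow, hk, map_zero]⟩
  simpa using matrix_det_one_sub_of_isNilpotent hM

/-- Block determinant with diagonal perturbation: with `N` nilpotent,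
`N∘(I-ρ)` nilpotent, `W := N(I-N)⁻¹` and `Ǩ := K - W`,
`det(I - Ǩρ) = det(I - N(I-ρ))⁻¹ · det(I - N(I-ρ) - (I-N)Kρ)`; equivalently
`det(I - Ǩρ) = det(I - N(I-ρ) - (I-N)Kρ)` since `det(I - N(I-ρ)) = 1`. -/
theorem det_one_sub_Kcheck_rho {𝕜 V : Type*} [Field 𝕜] [AddCommGroup V] [Module 𝕜 V]
    [FiniteDimensional 𝕜 V] (N K ρ : V →ₗ[𝕜] V)
    (hN : IsNilpotent N) (hNρ : IsNilpotent (N * (1 - ρ))) :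
    LinearMap.det (1 - (K - N * Ring.inverse (1 - N)) * ρ)
        = (LinearMap.det (1 - N * (1 - ρ)))⁻¹
            * LinearMap.det (1 - N * (1 - ρ) - (1 - N) * K * ρ) ∧
      LinearMap.det (1 - (K - N * Ring.inverse (1 - N)) * ρ)
        = LinearMap.det (1 - N * (1 - ρ) - (1 - N) * K * ρ) := by
  have hu : IsUnit (1 - N) := hN.isUnit_one_sub
  have hinv : (1 - N) * Ring.inverse (1 - N) = 1 := Ring.mul_inverse_cancel _ hu
  have hdetN : LinearMap.det (1 - N) = 1 := det_one_sub_of_isNilpotent hN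
  have hdetNρ : LinearMap.det (1 - N * (1 - ρ)) = 1 := det_one_sub_of_isNilpotent hNρ
  have key : (1 - N) * (1 - (K - N * Ring.inverse (1 - N)) * ρ)
      = 1 - N * (1 - ρ) - (1 - N) * K * ρ := by
    have : (1 - N) * (N * Ring.inverse (1 - N)) = N := by
      rw [show (1 - N) * (N * Ring.inverse (1 - N)) = N * ((1 - N) * Ring.inverse (1 - N)) by
        noncomm_ring]
      rw [hinv, mul_one]
    calc (1 - N) * (1 - (K - N * Ring.inverse (1 - N)) * ρ)
        = (1 - N) - (1 - N) * K * ρ + ((1 - N) * (N * Ring.inverse (1 - N))) * ρ := by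
          noncomm_ring
      _ = 1 - N * (1 - ρ) - (1 - N) * K * ρ := by rw [this]; noncomm_ring
  have hmain : LinearMap.det (1 - (K - N * Ring.inverse (1 - N)) * ρ)
      = LinearMap.det (1 - N * (1 - ρ) - (1 - N) * K * ρ) := by
    rw [← key, show (1 - N) * (1 - (K - N * Ring.inverse (1 - N)) * ρ)
      = (1 - N) ∘ₗ (1 - (K - N * Ring.inverse (1 - N)) * ρ) from rfl,
      LinearMap.det_comp, hdetN, one_mul]
  exact ⟨by rw [hdetNρ, inv_one, one_mul, hmain], hmain⟩
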